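/- arXiv:0901.3986 — 5 statements merged into one kernel-verified Lean document; each statement's English description precedes it below -/
import Mathlib

section
/- Let ψ be a nonzero complex-valued function in H⁴ ∩ H²₀(ℝ₊) (vanishing with all needed decay at infinity, ψ(0)=ψ'(0)=0) satisfying −ψ'''' + (1/4)ψ' = λψ on (0,∞) for some λ ∈ ℂ. Then Re λ < 0. More precisely, (λ + λ̄)∫|ψ|² = −2∫|ψ''|², since ∫(ψ̄ψ' + ψψ̄') = 0. -/
open Real Filter MeasureTheory Complex

/-! Pairing the eigenvalue equation with `ψ` in the real inner product of `ℂ` gives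
`⟪ψ, ψ''''⟫ = ¼⟪ψ, ψ'⟫ - Re λ ‖ψ‖²`. Integrating over `(0, ∞)`, the drift term is half the
derivative of `‖ψ‖²` and integrates to zero, while two integrations by parts turn `∫⟪ψ, ψ''''⟫`
into `∫‖ψ''‖²`; the boundary terms vanish by the Dirichlet conditions at `0` and the decay at
infinity. Hence `Re λ ∫‖ψ‖² = -∫‖ψ''‖²`, and `∫‖ψ''‖² > 0` because `ψ'' ≡ 0` together with the
decay of `ψ` and `ψ'` would force `ψ ≡ 0`. -/

open Set Topology ComplexConjugate
open scoped RealInnerProductSpace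

theorem hasDerivAt_iteratedDeriv_of_contDiff {𝕜 F : Type*} [NontriviallyNormedField 𝕜]
    [NormedAddCommGroup F] [NormedSpace 𝕜 F] {f : 𝕜 → F} {n k : ℕ} (hf : ContDiff 𝕜 n f)
    (hk : k < n) (x : 𝕜) : HasDerivAt (iteratedDeriv k f) (iteratedDeriv (k + 1) f x) x := by
  rw [iteratedDeriv_succ]
  exact (hf.differentiable_iteratedDeriv k (mod_cast hk) x).hasDerivAt

theorem integral_Ioi_deriv_eq_zero {G : Type*} [NormedAddCommGroup G] [NormedSpace ℝ G]
    [CompleteSpace G] {g g' : ℝ → G} {a : ℝ} (hcont : ContinuousWithinAt g (Ici a) a)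
    (hderiv : ∀ x ∈ Ioi a, HasDerivAt g (g' x) x) (hint : IntegrableOn g' (Ioi a))
    (ha : g a = 0) (htop : Tendsto g atTop (𝓝 0)) : ∫ x in Ioi a, g' x = 0 := by
  rw [integral_Ioi_of_hasDerivAt_of_tendsto hcont hderiv hint htop, ha, sub_zero]

theorem eqOn_zero_of_integral_eq_zero_of_nonneg {X : Type*} [TopologicalSpace X]
    [MeasurableSpace X] {μ : Measure X} [μ.IsOpenPosMeasure] {g : X → ℝ} {U : Set X}
    (hU : IsOpen U) (hg : ContinuousOn g U) (hg0 : 0 ≤ g) (hint : IntegrableOn g U μ)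
    (h : ∫ x in U, g x ∂μ = 0) : EqOn g 0 U :=
  Measure.eqOn_open_of_ae_eq ((integral_eq_zero_iff_of_nonneg hg0 hint).mp h) hU hg
    continuousOn_const

theorem eqOn_zero_Ioi_of_deriv_eqOn_zero {G : Type*} [NormedAddCommGroup G] [NormedSpace ℝ G]
    {f : ℝ → G} {a : ℝ} (hf : DifferentiableOn ℝ f (Ioi a)) (hf' : EqOn (deriv f) 0 (Ioi a))
    (htop : Tendsto f atTop (𝓝 0)) : EqOn f 0 (Ioi a) := by
  obtain ⟨c, hc⟩ := isOpen_Ioi.exists_is_const_of_deriv_eq_zero isPreconnected_Ioi hf hf'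
  have hlim : Tendsto f atTop (𝓝 c) := tendsto_const_nhds.congr' <| by
    filter_upwards [Ioi_mem_atTop a] with x hx using (hc x hx).symm
  intro x hx
  rw [hc x hx, tendsto_nhds_unique hlim htop, Pi.zero_apply]

section InnerProductSpace

variable {E : Type*} [NormedAddCommGroup E] [InnerProductSpace ℝ E]

theorem integrable_inner_of_integrable_sq_norm {α : Type*} [MeasurableSpace α] {μ : Measure α}
    {f g : α → E} (hf : AEStronglyMeasurable f μ) (hg : AEStronglyMeasurable g μ)
    (hf2 : Integrable (fun x => ‖f x‖ ^ 2) μ) (hg2 : Integrable (fun x => ‖g x‖ ^ 2) μ) :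
    Integrable (fun x => ⟪f x, g x⟫) μ := by
  refine (hf2.add hg2).mono' (hf.inner hg) (ae_of_all _ fun x => ?_)
  calc ‖⟪f x, g x⟫‖ ≤ ‖f x‖ * ‖g x‖ := norm_inner_le_norm _ _
    _ ≤ ‖f x‖ ^ 2 + ‖g x‖ ^ 2 := by nlinarith [sq_nonneg (‖f x‖ - ‖g x‖)]

theorem integral_Ioi_inner_deriv_eq_zero {f f' : ℝ → E} {a : ℝ}
    (hf : ∀ x, HasDerivAt f (f' x) x) (hf' : Continuous f') (ha : f a = 0)
    (htop : Tendsto f atTop (𝓝 0)) (hf2 : IntegrableOn (fun x => ‖f x‖ ^ 2) (Ioi a))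
    (hf'2 : IntegrableOn (fun x => ‖f' x‖ ^ 2) (Ioi a)) :
    ∫ x in Ioi a, ⟪f x, f' x⟫ = 0 := by
  have hcont : Continuous f := continuous_iff_continuousAt.2 fun x => (hf x).continuousAt
  have h := integral_Ioi_deriv_eq_zero (g := fun x => ‖f x‖ ^ 2)
    (hcont.norm.pow 2).continuousWithinAt (fun x _ => (hf x).norm_sq)
    ((integrable_inner_of_integrable_sq_norm hcont.aestronglyMeasurable
      hf'.aestronglyMeasurable hf2 hf'2).const_mul 2) (by simp [ha])
    (by simpa using htop.norm.pow 2)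
  rwa [integral_const_mul, mul_eq_zero, or_iff_right two_ne_zero] at h

/-- Integrating `⟪ψ, ψ''''⟫` by parts twice leaves this boundary term. -/
noncomputable def energyFlux (ψ : ℝ → E) (x : ℝ) : ℝ :=
  ⟪ψ x, iteratedDeriv 3 ψ x⟫ - ⟪deriv ψ x, iteratedDeriv 2 ψ x⟫

theorem hasDerivAt_energyFlux {ψ : ℝ → E} (hψ : ContDiff ℝ 4 ψ) (x : ℝ) :
    HasDerivAt (energyFlux ψ) (⟪ψ x, iteratedDeriv 4 ψ x⟫ - ‖iteratedDeriv 2 ψ x‖ ^ 2) x := by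
  have d (k : ℕ) (hk : k < 4) := hasDerivAt_iteratedDeriv_of_contDiff hψ hk x
  have d1 : HasDerivAt (deriv ψ) (iteratedDeriv 2 ψ x) x := by
    simpa only [iteratedDeriv_one] using d 1 (by norm_num)
  refine HasDerivAt.congr_deriv (f := energyFlux ψ) (((d 0 (by norm_num)).inner ℝ
    (d 3 (by norm_num))).sub (d1.inner ℝ (d 2 (by norm_num)))) ?_
  rw [zero_add, iteratedDeriv_one, iteratedDeriv_zero, real_inner_self_eq_norm_sq]
  ring

theorem tendsto_energyFlux {ψ : ℝ → E}
    (hdecay : ∀ k : ℕ, k ≤ 3 → Tendsto (iteratedDeriv k ψ) atTop (𝓝 0)) :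
    Tendsto (energyFlux ψ) atTop (𝓝 0) := by
  have h := ((hdecay 0 (by norm_num)).inner (𝕜 := ℝ) (hdecay 3 (by norm_num))).sub
    ((hdecay 1 (by norm_num)).inner (𝕜 := ℝ) (hdecay 2 (by norm_num)))
  simp only [iteratedDeriv_zero, iteratedDeriv_one, inner_zero_left, sub_zero] at h
  exact h

theorem integral_Ioi_inner_iteratedDeriv_four_eq_integral_sq_norm {ψ : ℝ → E}
    (hψ : ContDiff ℝ 4 ψ) (h0 : ψ 0 = 0) (h0' : deriv ψ 0 = 0)
    (hdecay : ∀ k : ℕ, k ≤ 3 → Tendsto (iteratedDeriv k ψ) atTop (𝓝 0))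
    (hint4 : IntegrableOn (fun x => ⟪ψ x, iteratedDeriv 4 ψ x⟫) (Ioi 0))
    (hint2 : IntegrableOn (fun x => ‖iteratedDeriv 2 ψ x‖ ^ 2) (Ioi 0)) :
    ∫ x in Ioi 0, ⟪ψ x, iteratedDeriv 4 ψ x⟫ = ∫ x in Ioi 0, ‖iteratedDeriv 2 ψ x‖ ^ 2 := by
  have h := integral_Ioi_deriv_eq_zero
    (hasDerivAt_energyFlux hψ 0).continuousAt.continuousWithinAt
    (fun x _ => hasDerivAt_energyFlux hψ x) (hint4.sub hint2) (by simp [energyFlux, h0, h0'])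
    (tendsto_energyFlux hdecay)
  rwa [integral_sub hint4 hint2, sub_eq_zero] at h

theorem eqOn_zero_of_integral_sq_norm_iteratedDeriv_two_eq_zero {ψ : ℝ → E} {a : ℝ}
    (hψ : ContDiff ℝ 2 ψ) (hψ0 : Tendsto ψ atTop (𝓝 0)) (hψ1 : Tendsto (deriv ψ) atTop (𝓝 0))
    (hint : IntegrableOn (fun x => ‖iteratedDeriv 2 ψ x‖ ^ 2) (Ioi a))
    (h : ∫ x in Ioi a, ‖iteratedDeriv 2 ψ x‖ ^ 2 = 0) : EqOn ψ 0 (Ioi a) := by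
  have hψ2 : EqOn (iteratedDeriv 2 ψ) 0 (Ioi a) := by
    have hsq := eqOn_zero_of_integral_eq_zero_of_nonneg isOpen_Ioi
      ((hψ.continuous_iteratedDeriv 2 le_rfl).norm.pow 2).continuousOn
      (fun _ => sq_nonneg _) hint h
    exact fun x hx => by simpa using hsq hx
  have hψ1 : EqOn (deriv ψ) 0 (Ioi a) :=
    eqOn_zero_Ioi_of_deriv_eqOn_zero
      (iteratedDeriv_one (f := ψ) ▸ hψ.differentiable_iteratedDeriv' 1).differentiableOn
      (by simpa [iteratedDeriv_succ] using hψ2) hψ1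
  exact eqOn_zero_Ioi_of_deriv_eqOn_zero (hψ.differentiable (by norm_num)).differentiableOn
    hψ1 hψ0

end InnerProductSpace

theorem Complex.conj_mul_add_mul_conj (z w : ℂ) :
    conj z * w + z * conj w = ((2 * ⟪z, w⟫ : ℝ) : ℂ) := by
  apply Complex.ext <;> simp [Complex.inner] <;> ring

theorem Complex.real_inner_mul_self (c z : ℂ) : ⟪z, c * z⟫ = c.re * ‖z‖ ^ 2 := by
  simp [Complex.inner, Complex.sq_norm, Complex.normSq_apply]; ring

theorem re_mul_integral_Ioi_sq_norm_eq_neg_integral_sq_norm_iteratedDeriv_two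
    {ψ : ℝ → ℂ} {lam : ℂ} (c : ℝ) (hψ : ContDiff ℝ 4 ψ)
    (hI0 : IntegrableOn (fun x => ‖ψ x‖ ^ 2) (Ioi 0))
    (hI1 : IntegrableOn (fun x => ‖deriv ψ x‖ ^ 2) (Ioi 0))
    (hI2 : IntegrableOn (fun x => ‖iteratedDeriv 2 ψ x‖ ^ 2) (Ioi 0))
    (h0 : ψ 0 = 0) (h0' : deriv ψ 0 = 0)
    (hdecay : ∀ k : ℕ, k ≤ 3 → Tendsto (iteratedDeriv k ψ) atTop (𝓝 0))
    (heigen : ∀ x ∈ Ioi (0 : ℝ), -(iteratedDeriv 4 ψ x) + c * deriv ψ x = lam * ψ x) :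
    lam.re * ∫ x in Ioi 0, ‖ψ x‖ ^ 2 = -∫ x in Ioi 0, ‖iteratedDeriv 2 ψ x‖ ^ 2 := by
  have hψ1 : Continuous (deriv ψ) := hψ.continuous_deriv (by norm_num)
  have hdrift_int : IntegrableOn (fun x => ⟪ψ x, deriv ψ x⟫) (Ioi 0) :=
    integrable_inner_of_integrable_sq_norm hψ.continuous.aestronglyMeasurable
      hψ1.aestronglyMeasurable hI0 hI1
  have hdrift : ∫ x in Ioi 0, ⟪ψ x, deriv ψ x⟫ = 0 :=
    integral_Ioi_inner_deriv_eq_zero (fun x => (hψ.differentiable (by norm_num) x).hasDerivAt)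
      hψ1 h0 (by simpa using hdecay 0 (by norm_num)) hI0 hI1
  have hψ4 : EqOn (fun x => ⟪ψ x, iteratedDeriv 4 ψ x⟫)
      (fun x => c * ⟪ψ x, deriv ψ x⟫ - lam.re * ‖ψ x‖ ^ 2) (Ioi 0) := fun x hx => by
    dsimp only
    rw [show iteratedDeriv 4 ψ x = c • deriv ψ x - lam * ψ x by
      rw [Complex.real_smul]; linear_combination -heigen x hx]
    rw [inner_sub_right, real_inner_smul_right, Complex.real_inner_mul_self]
  have h := integral_Ioi_inner_iteratedDeriv_four_eq_integral_sq_norm hψ h0 h0' hdecay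
    (IntegrableOn.congr_fun ((hdrift_int.const_mul _).sub (hI0.const_mul _)) hψ4.symm
      measurableSet_Ioi) hI2
  rw [setIntegral_congr_fun measurableSet_Ioi hψ4,
    integral_sub (hdrift_int.const_mul _) (hI0.const_mul _), integral_const_mul,
    integral_const_mul, hdrift, mul_zero, zero_sub] at h
  linarith

/-- Eigenvalues of `A = −D⁴ + (1/4)D` on the half-line with Dirichlet conditions
`ψ(0) = ψ'(0) = 0` and decay at infinity have negative real part; more precisely
`(λ + λ̄)∫|ψ|² = −2∫|ψ''|²`, since `∫(ψ̄ψ' + ψψ̄') = 0`. -/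
theorem halfline_operator_spectrum_negative
    (ψ : ℝ → ℂ) (lam : ℂ)
    (hsmooth : ContDiff ℝ 4 ψ)
    (hI0 : Integrable (fun ξ => ‖ψ ξ‖ ^ 2) (volume.restrict (Set.Ioi (0 : ℝ))))
    (hI1 : Integrable (fun ξ => ‖deriv ψ ξ‖ ^ 2) (volume.restrict (Set.Ioi (0 : ℝ))))
    (hI2 : Integrable (fun ξ => ‖iteratedDeriv 2 ψ ξ‖ ^ 2) (volume.restrict (Set.Ioi (0 : ℝ))))
    (hbc0 : ψ 0 = 0) (hbc0' : deriv ψ 0 = 0)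
    (hdecay : ∀ k : ℕ, k ≤ 3 → Tendsto (iteratedDeriv k ψ) atTop (nhds 0))
    (hODE : ∀ ξ ∈ Set.Ioi (0 : ℝ),
      -(iteratedDeriv 4 ψ ξ) + (1 / 4) * deriv ψ ξ = lam * ψ ξ)
    (hnz : 0 < ∫ ξ in Set.Ioi (0 : ℝ), ‖ψ ξ‖ ^ 2) :
    lam.re < 0 ∧
    (2 * lam.re) * (∫ ξ in Set.Ioi (0 : ℝ), ‖ψ ξ‖ ^ 2) =
      -2 * ∫ ξ in Set.Ioi (0 : ℝ), ‖iteratedDeriv 2 ψ ξ‖ ^ 2 ∧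
    (∫ ξ in Set.Ioi (0 : ℝ),
      ((starRingEnd ℂ) (ψ ξ) * deriv ψ ξ + ψ ξ * (starRingEnd ℂ) (deriv ψ ξ))) = 0 := by
  have hψ0 : Tendsto ψ atTop (𝓝 0) := by simpa using hdecay 0 (by norm_num)
  have hψ1 : Tendsto (deriv ψ) atTop (𝓝 0) := by simpa using hdecay 1 (by norm_num)
  have henergy := re_mul_integral_Ioi_sq_norm_eq_neg_integral_sq_norm_iteratedDeriv_two (1 / 4)
    hsmooth hI0 hI1 hI2 hbc0 hbc0' hdecay (by simpa using hODE)
  have hpos : 0 < ∫ x in Ioi 0, ‖iteratedDeriv 2 ψ x‖ ^ 2 := by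
    refine (integral_nonneg fun _ => sq_nonneg _).lt_of_ne' fun h => hnz.ne' ?_
    have hzero := eqOn_zero_of_integral_sq_norm_iteratedDeriv_two_eq_zero
      (hsmooth.of_le (by norm_num)) hψ0 hψ1 hI2 h
    exact setIntegral_eq_zero_of_forall_eq_zero fun x hx => by simp [hzero hx]
  have hdrift : ∫ x in Ioi 0, ⟪ψ x, deriv ψ x⟫ = 0 :=
    integral_Ioi_inner_deriv_eq_zero (fun x => (hsmooth.differentiable (by norm_num) x).hasDerivAt)
      (hsmooth.continuous_deriv (by norm_num)) hbc0 hψ0 hI0 hI1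
  refine ⟨by nlinarith, by linarith, ?_⟩
  simp_rw [Complex.conj_mul_add_mul_conj]
  rw [integral_complex_ofReal, integral_const_mul, hdrift, mul_zero, ofReal_zero]
end

section
/- Suppose the Poincaré-type inequality ∫_{I_l}|Ψ''|² ≥ Λ₀(l)·∫_{I_l}|Ψ|² holds for all Ψ ∈ H²₀(I_l), where Λ₀(l) = Λ₀(1)/l⁴ is the first Dirichlet eigenvalue of D⁴ on I_l. Then any eigenvalue λ of the operator B*Ψ = −Ψ'''' − (1/4)yΨ' with Dirichlet conditions Ψ = Ψ' = 0 at y = ±l satisfies 2·Re λ ≤ −(2Λ₀(1)/l⁴ − 1/4). Consequently, if l⁴ < 8Λ₀(1), then Re λ < 0 for every eigenvalue λ. -/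
open Real MeasureTheory Complex

/-!
Pair the eigenvalue equation with `Ψ` in the real inner product of `ℂ` and integrate over `I_l`.
Two integrations by parts turn `⟪Ψ, Ψ''''⟫` into `‖Ψ''‖²`, and since `2⟪Ψ, Ψ'⟫ = (‖Ψ‖²)'`,
one more integration by parts turns the drift term into `-(1/2)‖Ψ‖²`; all boundary terms vanish
by the Dirichlet conditions. This gives the energy identity
`Re λ ‖Ψ‖² = -‖Ψ''‖² + ‖Ψ‖² / 8`, and the Poincaré inequality bounds `‖Ψ''‖²` from below.
-/

open Set
open scoped RealInnerProductSpace Interval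

theorem ContDiff.hasDerivAt_iteratedDeriv {F : Type*} [NormedAddCommGroup F] [NormedSpace ℝ F]
    {n : WithTop ℕ∞} {f : ℝ → F} (hf : ContDiff ℝ n f) {k : ℕ} (hk : k < n) (x : ℝ) :
    HasDerivAt (iteratedDeriv k f) (iteratedDeriv (k + 1) f x) x := by
  rw [iteratedDeriv_succ]
  exact (hf.differentiable_iteratedDeriv k hk x).hasDerivAt

theorem Complex.real_inner_mul_self_right (z w : ℂ) : ⟪z, w * z⟫ = w.re * ‖z‖ ^ 2 := by
  rw [Complex.inner, mul_assoc, mul_conj, normSq_eq_norm_sq, re_mul_ofReal]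

section InnerProductSpace

variable {E : Type*} [NormedAddCommGroup E] [InnerProductSpace ℝ E] {a b : ℝ}

theorem intervalIntegral.integral_inner_deriv_eq_neg_of_eq_zero {f g f' g' : ℝ → E}
    (hf : ∀ x ∈ [[a, b]], HasDerivAt f (f' x) x) (hg : ∀ x ∈ [[a, b]], HasDerivAt g (g' x) x)
    (hfg' : IntervalIntegrable (fun x ↦ ⟪f x, g' x⟫) volume a b)
    (hf'g : IntervalIntegrable (fun x ↦ ⟪f' x, g x⟫) volume a b) (ha : f a = 0) (hb : f b = 0) :
    ∫ x in a..b, ⟪f x, g' x⟫ = -∫ x in a..b, ⟪f' x, g x⟫ := by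
  have hFTC := intervalIntegral.integral_eq_sub_of_hasDerivAt
    (fun x hx ↦ (hf x hx).inner ℝ (hg x hx)) (hfg'.add hf'g)
  rw [intervalIntegral.integral_add hfg' hf'g] at hFTC
  simp only [ha, hb, inner_zero_left, sub_self] at hFTC
  linarith

theorem intervalIntegral.integral_inner_iteratedDeriv_four_of_eq_zero {f : ℝ → E}
    (hf : ContDiff ℝ 4 f) (ha : f a = 0) (hb : f b = 0) (ha' : deriv f a = 0)
    (hb' : deriv f b = 0) :
    ∫ x in a..b, ⟪f x, iteratedDeriv 4 f x⟫ = ∫ x in a..b, ‖iteratedDeriv 2 f x‖ ^ 2 := by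
  have hD (k : ℕ) (hk : k < 4) (x : ℝ) := hf.hasDerivAt_iteratedDeriv (mod_cast hk) x
  have hC (k : ℕ) (hk : k ≤ 4) := hf.continuous_iteratedDeriv k (mod_cast hk)
  have hint (j k : ℕ) (hj : j ≤ 4) (hk : k ≤ 4) :
      IntervalIntegrable (fun x ↦ ⟪iteratedDeriv j f x, iteratedDeriv k f x⟫) volume a b :=
    ((hC j hj).inner (hC k hk)).intervalIntegrable a b
  have h₀₄ := integral_inner_deriv_eq_neg_of_eq_zero (fun x _ ↦ hD 0 (by norm_num) x)
    (fun x _ ↦ hD 3 (by norm_num) x) (hint 0 4 (by norm_num) le_rfl)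
    (hint 1 3 (by norm_num) (by norm_num)) (by simpa using ha) (by simpa using hb)
  have h₁₃ := integral_inner_deriv_eq_neg_of_eq_zero (fun x _ ↦ hD 1 (by norm_num) x)
    (fun x _ ↦ hD 2 (by norm_num) x) (hint 1 3 (by norm_num) (by norm_num))
    (hint 2 2 (by norm_num) (by norm_num)) (by simpa using ha') (by simpa using hb')
  simp only [iteratedDeriv_zero, real_inner_self_eq_norm_sq] at h₀₄ h₁₃
  rw [h₀₄, h₁₃, neg_neg]

theorem intervalIntegral.integral_mul_inner_deriv_of_eq_zero {f : ℝ → E} (hf : ContDiff ℝ 1 f)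
    (ha : f a = 0) (hb : f b = 0) :
    ∫ x in a..b, x * ⟪f x, deriv f x⟫ = -(1 / 2) * ∫ x in a..b, ‖f x‖ ^ 2 := by
  have hf' : Continuous (deriv f) := hf.continuous_deriv le_rfl
  have hparts := integral_mul_deriv_eq_deriv_mul (u := id) (u' := fun _ ↦ 1)
    (v := fun x ↦ ‖f x‖ ^ 2) (v' := fun x ↦ 2 * ⟪f x, deriv f x⟫)
    (fun x _ ↦ hasDerivAt_id x)
    (fun x _ ↦ ((hf.differentiable one_ne_zero x).hasDerivAt).norm_sq)
    intervalIntegrable_const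
    ((continuous_const.mul (hf.continuous.inner hf')).intervalIntegrable a b)
  simp only [id, ha, hb, norm_zero, one_mul, mul_left_comm _ (2 : ℝ),
    intervalIntegral.integral_const_mul] at hparts
  linarith

end InnerProductSpace

theorem re_mul_integral_norm_sq_eq_of_eigenfunction {a b c : ℝ} {Ψ : ℝ → ℂ} {lam : ℂ}
    (hab : a ≤ b) (hΨ : ContDiff ℝ 4 Ψ) (ha : Ψ a = 0) (hb : Ψ b = 0) (ha' : deriv Ψ a = 0)
    (hb' : deriv Ψ b = 0)
    (hODE : ∀ y ∈ Ioo a b, -(iteratedDeriv 4 Ψ y) - c * y * deriv Ψ y = lam * Ψ y) :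
    lam.re * ∫ y in Ioo a b, ‖Ψ y‖ ^ 2 =
      -(∫ y in Ioo a b, ‖iteratedDeriv 2 Ψ y‖ ^ 2) + c / 2 * ∫ y in Ioo a b, ‖Ψ y‖ ^ 2 := by
  have hIoo (g : ℝ → ℝ) : ∫ y in Ioo a b, g y = ∫ y in a..b, g y := by
    rw [intervalIntegral.integral_of_le hab, integral_Ioc_eq_integral_Ioo]
  have hpointwise : ∀ y ∈ Ioo a b, lam.re * ‖Ψ y‖ ^ 2 =
      -⟪Ψ y, iteratedDeriv 4 Ψ y⟫ - c * (y * ⟪Ψ y, deriv Ψ y⟫) := fun y hy ↦ by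
    rw [← Complex.real_inner_mul_self_right, ← hODE y hy, inner_sub_right, inner_neg_right,
      ← ofReal_mul, ← Complex.real_smul, inner_smul_right, mul_assoc]
  rw [← integral_const_mul, setIntegral_congr_fun measurableSet_Ioo hpointwise, hIoo, hIoo, hIoo,
    intervalIntegral.integral_sub, intervalIntegral.integral_neg,
    intervalIntegral.integral_const_mul,
    intervalIntegral.integral_inner_iteratedDeriv_four_of_eq_zero hΨ ha hb ha' hb',
    intervalIntegral.integral_mul_inner_deriv_of_eq_zero (hΨ.of_le (by norm_num)) ha hb]
  · ring
  · exact (hΨ.continuous.inner (hΨ.continuous_iteratedDeriv 4 le_rfl)).neg.intervalIntegrable a b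
  · exact (continuous_const.mul (continuous_id.mul
      (hΨ.continuous.inner (hΨ.continuous_deriv (by norm_num))))).intervalIntegrable a b

theorem regularity_small_l_via_Poincare_general
    (l : ℝ) (hl : 0 < l) (Λ₀ : ℝ)
    (hPoincare : ∀ Φ : ℝ → ℂ, ContDiff ℝ 2 Φ →
      Φ l = 0 → Φ (-l) = 0 → deriv Φ l = 0 → deriv Φ (-l) = 0 →
      (∫ y in Set.Ioo (-l) l, ‖iteratedDeriv 2 Φ y‖ ^ 2) ≥
        (Λ₀ / l ^ 4) * ∫ y in Set.Ioo (-l) l, ‖Φ y‖ ^ 2)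
    (Ψ : ℝ → ℂ) (lam : ℂ)
    (hsmooth : ContDiff ℝ 4 Ψ)
    (hΨne : 0 < ∫ y in Set.Ioo (-l) l, ‖Ψ y‖ ^ 2)
    (hbc1 : Ψ l = 0) (hbc2 : Ψ (-l) = 0)
    (hbc3 : deriv Ψ l = 0) (hbc4 : deriv Ψ (-l) = 0)
    (hODE : ∀ y ∈ Set.Ioo (-l) l,
      -(iteratedDeriv 4 Ψ y) - (1 / 4) * y * deriv Ψ y = lam * Ψ y) :
    2 * lam.re ≤ -(2 * Λ₀ / l ^ 4 - 1 / 4) ∧ (l ^ 4 < 8 * Λ₀ → lam.re < 0) := by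
  have henergy := re_mul_integral_norm_sq_eq_of_eigenfunction (c := 1 / 4) (neg_le_self hl.le)
    hsmooth hbc2 hbc1 hbc4 hbc3 (by simpa using hODE)
  have hre : lam.re ≤ -(Λ₀ / l ^ 4) + 1 / 8 := by
    refine le_of_mul_le_mul_right ?_ hΨne
    linarith [hPoincare Ψ (hsmooth.of_le (by norm_num)) hbc1 hbc2 hbc3 hbc4]
  have hl4 : 0 < l ^ 4 := by positivity
  refine ⟨by rw [mul_div_assoc]; linarith, fun hsmall ↦ ?_⟩
  have : 1 / 8 < Λ₀ / l ^ 4 := by rw [lt_div_iff₀ hl4]; linarith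
  linarith

/-- Given the Poincaré inequality `∫|Ψ''|² ≥ (Λ₀(1)/l⁴)∫|Ψ|²` on `H²₀(I_l)`,
every eigenvalue `λ` of `B*Ψ = −Ψ'''' − (1/4)yΨ'` with Dirichlet conditions at `±l`
satisfies `2 Re λ ≤ −(2Λ₀(1)/l⁴ − 1/4)`; hence if `l⁴ < 8Λ₀(1)` then `Re λ < 0`. -/
theorem regularity_small_l_via_Poincare
    (l : ℝ) (hl : 0 < l) (Λ₀ : ℝ) (hΛ₀ : 0 < Λ₀)
    (hPoincare : ∀ Φ : ℝ → ℂ, ContDiff ℝ 2 Φ →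
      Φ l = 0 → Φ (-l) = 0 → deriv Φ l = 0 → deriv Φ (-l) = 0 →
      (∫ y in Set.Ioo (-l) l, ‖iteratedDeriv 2 Φ y‖ ^ 2) ≥
        (Λ₀ / l ^ 4) * ∫ y in Set.Ioo (-l) l, ‖Φ y‖ ^ 2)
    (Ψ : ℝ → ℂ) (lam : ℂ)
    (hsmooth : ContDiff ℝ 4 Ψ)
    (hΨne : 0 < ∫ y in Set.Ioo (-l) l, ‖Ψ y‖ ^ 2)
    (hbc1 : Ψ l = 0) (hbc2 : Ψ (-l) = 0)
    (hbc3 : deriv Ψ l = 0) (hbc4 : deriv Ψ (-l) = 0)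
    (hODE : ∀ y ∈ Set.Ioo (-l) l,
      -(iteratedDeriv 4 Ψ y) - (1 / 4) * y * deriv Ψ y = lam * Ψ y) :
    2 * lam.re ≤ -(2 * Λ₀ / l ^ 4 - 1 / 4) ∧ (l ^ 4 < 8 * Λ₀ → lam.re < 0) :=
  regularity_small_l_via_Poincare_general l hl Λ₀ hPoincare Ψ lam hsmooth hΨne hbc1 hbc2 hbc3 hbc4
    hODE
end

section
/- For m = 2, the polynomials ψ*_k(y) = (1/√(k!))·Σ_{j=0}^{⌊k/4⌋} ((−1)^{j}/j!)·D^{4j}(y^k) satisfy the eigenvalue equation −(ψ*_k)'''' − (1/4)·y·(ψ*_k)' = −(k/4)·ψ*_k for every integer k ≥ 0. -/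
/-! Write `ψ = Σ_{j ≤ ⌊k/4⌋} v_j / j!` with `v_j = D^{4j}(y^k) / √(k!)`. The Euler
operator `y D` multiplies `v_j` by `k - 4j`, while `D⁴` moves `v_j` to `v_{j+1}` and kills
the last rung, so `D⁴ψ = Σ j v_j / j!` and hence `4 D⁴ψ + y ψ' = k ψ`. The computation is
carried out on polynomials, where both operators are linear. -/

open Finset Nat Polynomial

section Ladder

variable {K M : Type*} [Field K] [CharZero K] [AddCommGroup M] [Module K M]

theorem sum_range_inv_factorial_smul_succ (v : ℕ → M) {N : ℕ} (hN : v (N + 1) = 0) :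
    ∑ j ∈ range (N + 1), (j ! : K)⁻¹ • v (j + 1) =
      ∑ j ∈ range (N + 1), ((j : K) / j !) • v j := by
  rw [sum_range_succ, hN, smul_zero, add_zero, sum_range_succ']
  simp only [Nat.cast_zero, zero_div, zero_smul, add_zero]
  refine sum_congr rfl fun j _ => ?_
  rw [factorial_succ, Nat.cast_mul, div_mul_cancel_left₀ (Nat.cast_ne_zero.mpr j.succ_ne_zero)]

theorem smul_add_eq_smul_of_ladder (A E : M →ₗ[K] M) (v : ℕ → M) (c d : K)
    {N : ℕ} (hA : ∀ j, A (v j) = v (j + 1))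
    (hE : ∀ j ∈ range (N + 1), E (v j) = (c - d * j) • v j) (hN : v (N + 1) = 0) :
    d • A (∑ j ∈ range (N + 1), (j ! : K)⁻¹ • v j) +
        E (∑ j ∈ range (N + 1), (j ! : K)⁻¹ • v j) =
      c • ∑ j ∈ range (N + 1), (j ! : K)⁻¹ • v j := by
  simp only [map_sum, map_smul, hA]
  rw [sum_range_inv_factorial_smul_succ v hN, smul_sum, smul_sum, ← sum_add_distrib]
  refine sum_congr rfl fun j hj => ?_
  rw [hE j hj, smul_smul, smul_smul, smul_smul, ← add_smul]
  congr 1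
  field_simp
  ring

end Ladder

theorem X_mul_derivative_iterate_derivative_X_pow {R : Type*} [CommSemiring R] (n k : ℕ) :
    X * derivative (derivative^[n] (X ^ k : R[X])) =
      ((k - n : ℕ) : R) • derivative^[n] (X ^ k) := by
  rw [iterate_derivative_X_pow_eq_C_mul, derivative_C_mul, derivative_X_pow, smul_eq_C_mul]
  rcases k - n with _ | m
  · simp
  · simp only [Nat.cast_add_one, add_tsub_cancel_right, pow_succ]
    ring

theorem iteratedDeriv_polynomial_eval {𝕜 : Type*} [NontriviallyNormedField 𝕜] (p : 𝕜[X])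
    (n : ℕ) :
    iteratedDeriv n (fun x => p.eval x) = fun x => (derivative^[n] p).eval x := by
  induction n with
  | zero => simp
  | succ n ih =>
    rw [iteratedDeriv_succ, ih, Function.iterate_succ_apply']
    exact funext fun x => Polynomial.deriv _

/-- The paper's `ψ*_k` without its normalising factor `1 / √(k!)`. -/
noncomputable def biharmonicAdjointPoly (k : ℕ) : ℝ[X] :=
  ∑ j ∈ range (k / 4 + 1), (j ! : ℝ)⁻¹ • derivative^[4 * j] (X ^ k)

theorem biharmonicAdjointPoly_eigen (k : ℕ) :
    (4 : ℝ) • derivative^[4] (biharmonicAdjointPoly k) +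
        X * derivative (biharmonicAdjointPoly k) =
      (k : ℝ) • biharmonicAdjointPoly k := by
  have hA : ∀ j, (derivative ^ 4 : Module.End ℝ ℝ[X]) (derivative^[4 * j] (X ^ k)) =
      derivative^[4 * (j + 1)] (X ^ k) := fun j => by
    rw [Module.End.pow_apply, ← Function.iterate_add_apply, add_comm, mul_add_one]
  have hE : ∀ j ∈ range (k / 4 + 1),
      (LinearMap.mulLeft ℝ X ∘ₗ derivative) (derivative^[4 * j] (X ^ k)) =
        ((k : ℝ) - 4 * j) • derivative^[4 * j] (X ^ k) := fun j hj => by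
    have h4j : 4 * j ≤ k := by rw [mem_range] at hj; omega
    rw [LinearMap.comp_apply, LinearMap.mulLeft_apply, X_mul_derivative_iterate_derivative_X_pow,
      Nat.cast_sub h4j, Nat.cast_mul, Nat.cast_ofNat]
  have hN : derivative^[4 * (k / 4 + 1)] (X ^ k : ℝ[X]) = 0 :=
    iterate_derivative_eq_zero (by rw [natDegree_X_pow]; omega)
  simpa only [biharmonicAdjointPoly, Module.End.pow_apply, LinearMap.comp_apply,
    LinearMap.mulLeft_apply] using
    smul_add_eq_smul_of_ladder _ _ _ (k : ℝ) 4 hA hE hN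

/-- For `m = 2`: the generalized Hermite polynomials
`ψ*_k(y) = (1/√(k!))·Σ_{j=0}^{⌊k/4⌋} ((−1)^{2j}/j!)·D^{4j}(y^k)` satisfy
`−(ψ*_k)'''' − (1/4)·y·(ψ*_k)' = −(k/4)·ψ*_k`. -/
theorem biharmonic_adjoint_polynomial_eigenfunctions (k : ℕ) :
    let ψ : ℝ → ℝ := fun y =>
      (1 / Real.sqrt (Nat.factorial k)) *
        ∑ j ∈ Finset.range (k / 4 + 1),
          ((-1 : ℝ) ^ (2 * j) / (Nat.factorial j)) *
            iteratedDeriv (4 * j) (fun x : ℝ => x ^ k) y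
    ∀ y : ℝ, -(iteratedDeriv 4 ψ y) - (1 / 4) * y * deriv ψ y =
      -((k : ℝ) / 4) * ψ y := by
  intro ψ y
  have hψ : ψ = fun x => ((1 / √(k !)) • biharmonicAdjointPoly k).eval x := by
    funext x
    have hpow : (fun x : ℝ => x ^ k) = fun x => (X ^ k : ℝ[X]).eval x := by simp
    simp only [ψ, biharmonicAdjointPoly, hpow, iteratedDeriv_polynomial_eval, eval_smul,
      eval_finsetSum, pow_mul, neg_one_sq, one_pow, one_div, smul_eq_mul]
  have hP := congrArg (eval y) (biharmonicAdjointPoly_eigen k)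
  simp only [eval_add, eval_smul, eval_mul, eval_X, smul_eq_mul] at hP
  rw [← iteratedDeriv_one, hψ, iteratedDeriv_polynomial_eval, iteratedDeriv_polynomial_eval]
  simp only [Function.iterate_one, iterate_derivative_smul, eval_smul, smul_eq_mul]
  linear_combination (-(1 / √(k !)) / 4) * hP
end

section
/- For each m ≥ 1 and integer k ≥ 0, the polynomial ψ*_k(y) = (1/√(k!))·Σ_{j=0}^{⌊k/(2m)⌋} ((−1)^{mj}/j!)·D^{2mj}(y^k) satisfies B*ψ*_k = −(k/(2m))·ψ*_k, where B* = (−1)^{m+1}D^{2m} − (1/(2m))·yD. -/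
/-!
Write `φⱼ = D^{2mj}(y^k)`, so that `ψ*_k` is a multiple of `∑ⱼ cⱼ φⱼ` with `cⱼ = εʲ/j!`,
`ε = (-1)^m`. Each `φⱼ` is homogeneous of degree `k - 2mj`, so Euler's identity gives
`y φⱼ' = (k - 2mj) φⱼ`, while `D^{2m} φⱼ = φⱼ₊₁`. Since `ε cⱼ = (j + 1) cⱼ₊₁`, the
contribution of `D^{2m}` telescopes against the `-j` part of the eigenvalue, the last term
vanishing because `φ_{⌊k/2m⌋+1} = 0`.
-/

open Real Finset
open scoped ContDiff

open Nat in
theorem mul_sum_range_pow_div_factorial_succ {K : Type*} [Field K] [CharZero K] (ε : K)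
    (g : ℕ → K) {N : ℕ} (hg : g (N + 1) = 0) :
    ε * ∑ j ∈ range (N + 1), ε ^ j / j ! * g (j + 1) =
      ∑ j ∈ range (N + 1), j * (ε ^ j / j !) * g j := by
  have shift (j : ℕ) : ε * (ε ^ j / j ! * g (j + 1)) =
      ((j + 1 : ℕ) : K) * (ε ^ (j + 1) / (j + 1)! * g (j + 1)) := by
    push_cast [factorial_succ]
    field_simp
    ring
  set t : ℕ → K := fun j => j * (ε ^ j / j ! * g j)
  calc ε * ∑ j ∈ range (N + 1), ε ^ j / j ! * g (j + 1)
      = ∑ j ∈ range (N + 1), t (j + 1) + t 0 := by simp [t, mul_sum, shift]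
    _ = ∑ j ∈ range (N + 1), t j := by rw [← sum_range_succ', sum_range_succ]; simp [t, hg]
    _ = ∑ j ∈ range (N + 1), j * (ε ^ j / j !) * g j := by simp only [t, mul_assoc]

theorem iteratedDeriv_iteratedDeriv {𝕜 F : Type*} [NontriviallyNormedField 𝕜]
    [NormedAddCommGroup F] [NormedSpace 𝕜 F] (m n : ℕ) (f : 𝕜 → F) :
    iteratedDeriv m (iteratedDeriv n f) = iteratedDeriv (m + n) f := by
  simp only [iteratedDeriv_eq_iterate, Function.iterate_add_apply]

theorem iteratedDeriv_fun_sum_mul_iteratedDeriv {𝕜 ι : Type*} [NontriviallyNormedField 𝕜]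
    {f : 𝕜 → 𝕜} (hf : ContDiff 𝕜 ∞ f) (s : Finset ι) (c : ι → 𝕜) (e : ι → ℕ) (n : ℕ) (x : 𝕜) :
    iteratedDeriv n (fun y => ∑ j ∈ s, c j * iteratedDeriv (e j) f y) x =
      ∑ j ∈ s, c j * iteratedDeriv (n + e j) f x := by
  have hsmooth (j : ι) : ContDiffAt 𝕜 n (fun y => c j * iteratedDeriv (e j) f y) x := by
    rw [iteratedDeriv_eq_iterate]
    exact (contDiffAt_const.mul (hf.iterate_deriv _).contDiffAt).of_le
      (by exact_mod_cast le_top)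
  rw [iteratedDeriv_fun_sum fun j _ => hsmooth j]
  simp only [iteratedDeriv_const_mul_field, ← iteratedDeriv_iteratedDeriv]

theorem mul_iteratedDeriv_succ_pow {𝕜 : Type*} [NontriviallyNormedField 𝕜] (k n : ℕ) (x : 𝕜) :
    x * iteratedDeriv (1 + n) (· ^ k) x = ((k : 𝕜) - n) * iteratedDeriv n (· ^ k) x := by
  simp only [iteratedDeriv_pow]
  rcases lt_or_ge n k with hnk | hkn
  · have hx : x * x ^ (k - n - 1) = x ^ (k - n) := by
      rw [← pow_succ', Nat.sub_add_cancel (Nat.sub_pos_of_lt hnk)]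
    rw [add_comm, Nat.descFactorial_succ, ← Nat.sub_sub, Nat.cast_mul, Nat.cast_sub hnk.le,
      ← hx]
    ring
  · have hk : k.descFactorial (1 + n) = 0 := Nat.descFactorial_eq_zero_iff_lt.mpr (by omega)
    rcases hkn.eq_or_lt with rfl | hkn
    · simp [hk]
    · simp [hk, Nat.descFactorial_eq_zero_iff_lt.mpr hkn]

/-- For each `m ≥ 1` and `k ≥ 0`, the generalized Hermite polynomial
`ψ*_k(y) = (1/√(k!))·Σ_{j=0}^{⌊k/(2m)⌋} ((−1)^{mj}/j!)·D^{2mj}(y^k)` satisfies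
`B*ψ*_k = −(k/(2m))·ψ*_k` with `B* = (−1)^{m+1}D^{2m} − (1/(2m))yD`. -/
theorem polyharmonic_adjoint_polynomial_eigenfunctions (m k : ℕ) (hm : 1 ≤ m) :
    let ψ : ℝ → ℝ := fun y =>
      (1 / Real.sqrt (Nat.factorial k)) *
        ∑ j ∈ Finset.range (k / (2 * m) + 1),
          ((-1 : ℝ) ^ (m * j) / (Nat.factorial j)) *
            iteratedDeriv (2 * m * j) (fun x : ℝ => x ^ k) y
    ∀ y : ℝ, (-1 : ℝ) ^ (m + 1) * iteratedDeriv (2 * m) ψ y -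
      (1 / (2 * (m : ℝ))) * y * deriv ψ y = -((k : ℝ) / (2 * m)) * ψ y := by
  intro ψ y
  set N := k / (2 * m)
  set C : ℝ := 1 / Real.sqrt (Nat.factorial k)
  set c : ℕ → ℝ := fun j => (-1) ^ (m * j) / (Nat.factorial j)
  set f : ℝ → ℝ := fun x => x ^ k
  have hf : ContDiff ℝ ∞ f := contDiff_id.pow k
  set S₀ := ∑ j ∈ range (N + 1), c j * iteratedDeriv (2 * m * j) f y
  set S₁ := ∑ j ∈ range (N + 1), j * c j * iteratedDeriv (2 * m * j) f y
  have hψ : ψ = fun z => C * ∑ j ∈ range (N + 1), c j * iteratedDeriv (2 * m * j) f z := rfl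
  have hD2m : iteratedDeriv (2 * m) ψ y =
      C * ∑ j ∈ range (N + 1), c j * iteratedDeriv (2 * m * (j + 1)) f y := by
    rw [hψ, iteratedDeriv_const_mul_field, iteratedDeriv_fun_sum_mul_iteratedDeriv hf]
    simp only [mul_add_one, add_comm]
  have hEuler : y * deriv ψ y = C * (k * S₀ - 2 * m * S₁) := by
    rw [← iteratedDeriv_one, hψ, iteratedDeriv_const_mul_field,
      iteratedDeriv_fun_sum_mul_iteratedDeriv hf, mul_left_comm]
    congr 1
    simp only [S₀, S₁, mul_sum, ← sum_sub_distrib]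
    refine sum_congr rfl fun j _ => ?_
    rw [mul_left_comm y, mul_iteratedDeriv_succ_pow]
    push_cast
    ring
  have hvanish : iteratedDeriv (2 * m * (N + 1)) f y = 0 := by
    rw [iteratedDeriv_pow, Nat.descFactorial_eq_zero_iff_lt.mpr (Nat.lt_mul_div_succ k (by omega))]
    simp
  have hshift := mul_sum_range_pow_div_factorial_succ ((-1 : ℝ) ^ m)
    (fun j => iteratedDeriv (2 * m * j) f y) hvanish
  simp only [← pow_mul] at hshift
  have hm₀ : (m : ℝ) ≠ 0 := by norm_cast; omega
  rw [hD2m, mul_assoc _ y, hEuler, show ψ y = C * S₀ from rfl]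
  field_simp
  linear_combination (-2 * m * C) * hshift
end

section
/- Let ψ_k = ((−1)^k/√(k!))D^kF and ψ*_l be the generalized Hermite polynomial of degree l (as in the poly-harmonic spectral theory), with F Schwartz-class and ∫F = 1. Then ⟨ψ_k, ψ*_l⟩_{L²(ℝ)} = δ_{kl} for all k, l ≥ 0, i.e., the two families are bi-orthonormal. -/
/-!
Write `μ n = ∫ F y * y ^ n`. Integration by parts gives
`∫ D^k F · y^n = (-1)^k n!/(n-k)! μ (n-k)`, and testing `B F = 0` against `y^n` yields
`n μ n = 2m (-1)^(m+1) n!/(n-2m)! μ (n-2m)`. With `μ 0 = 1` this forces `μ n = 0` unless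
`2m ∣ n`, and `μ (2ms) = (2ms)! ((-1)^(m+1))^s / s!`, so `μ n / n!` are the Taylor coefficients
of `exp((-1)^(m+1) X^(2m))`, while `√(l!) ψ*_l = exp((-1)^m D^(2m)) y^l`. Hence, when
`l - k = 2mr`, the pairing `⟨ψ_k, ψ*_l⟩` is the coefficient of `X^r` in
`exp((-1)^m X) · exp((-1)^(m+1) X) = 1`, i.e. `δ_{r0}`, and it vanishes for all other `k, l`.
-/

open Real MeasureTheory Finset
open scoped SchwartzMap Nat

namespace SchwartzMap

noncomputable def moment (G : 𝓢(ℝ, ℝ)) (n : ℕ) : ℝ := ∫ y, G y * y ^ n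

lemma coe_iterate_derivCLM (G : 𝓢(ℝ, ℝ)) (k : ℕ) :
    ⇑((derivCLM ℝ ℝ)^[k] G) = iteratedDeriv k G := by
  induction k generalizing G with
  | zero => rfl
  | succ k ih =>
    rw [Function.iterate_succ_apply, ih, iteratedDeriv_succ']
    congr 1

lemma integrable_mul_pow (G : 𝓢(ℝ, ℝ)) (n : ℕ) : Integrable fun y ↦ G y * y ^ n :=
  (G.integrable_pow_mul volume n).mono (by fun_prop) <| .of_forall fun y ↦ by
    simp [mul_comm]

lemma integrable_iteratedDeriv_mul_pow (G : 𝓢(ℝ, ℝ)) (k n : ℕ) :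
    Integrable fun y ↦ iteratedDeriv k G y * y ^ n := by
  simpa [coe_iterate_derivCLM] using integrable_mul_pow ((derivCLM ℝ ℝ)^[k] G) n

lemma integral_deriv_mul_pow (G : 𝓢(ℝ, ℝ)) (n : ℕ) :
    ∫ y, deriv G y * y ^ n = -n * G.moment (n - 1) := by
  have hpow (x : ℝ) : HasDerivAt (· ^ n) (n * x ^ (n - 1)) x := by
    simpa using hasDerivAt_pow n x
  have hderiv : Integrable fun y ↦ y ^ n * deriv G y := by
    simpa [mul_comm] using integrable_mul_pow (derivCLM ℝ ℝ G) n
  have hpow' : Integrable fun y ↦ n * y ^ (n - 1) * G y := by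
    simpa [mul_comm, mul_assoc] using (integrable_mul_pow G (n - 1)).const_mul (n : ℝ)
  have hmoment : Integrable fun y ↦ y ^ n * G y := by
    simpa [mul_comm] using integrable_mul_pow G n
  have h := integral_mul_deriv_eq_deriv_mul_of_integrable (fun x _ ↦ hpow x)
    (fun x _ ↦ G.hasDerivAt x) hderiv hpow' hmoment
  simp only [moment, mul_comm (deriv G _), h, ← integral_const_mul, ← integral_neg]
  congr 1 with y
  ring

lemma integral_iteratedDeriv_mul_pow (G : 𝓢(ℝ, ℝ)) (k n : ℕ) :
    ∫ y, iteratedDeriv k G y * y ^ n = (-1) ^ k * n.descFactorial k * G.moment (n - k) := by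
  induction k generalizing G with
  | zero => simp [moment]
  | succ k ih =>
    have hderiv : deriv G = derivCLM ℝ ℝ G := funext (derivCLM_apply ℝ G ·)
    rw [iteratedDeriv_succ', hderiv, ih, moment, ← hderiv, integral_deriv_mul_pow, Nat.sub_sub,
      Nat.descFactorial_succ]
    push_cast
    ring

lemma integrable_iteratedDeriv_mul_iteratedDeriv_pow (G : 𝓢(ℝ, ℝ)) (k i l : ℕ) :
    Integrable fun y ↦ iteratedDeriv k G y * iteratedDeriv i (· ^ l) y := by
  simpa [mul_left_comm] using
    (integrable_iteratedDeriv_mul_pow G k (l - i)).const_mul (l.descFactorial i : ℝ)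

lemma integral_iteratedDeriv_mul_iteratedDeriv_pow (G : 𝓢(ℝ, ℝ)) (k i l : ℕ) :
    ∫ y, iteratedDeriv k G y * iteratedDeriv i (· ^ l) y =
      (-1) ^ k * (l.descFactorial (i + k) * G.moment (l - (i + k))) := by
  have hdesc := Nat.descFactorial_mul_descFactorial (n := l) (Nat.le_add_right i k)
  rw [Nat.add_sub_cancel_left] at hdesc
  simp only [iteratedDeriv_pow, mul_left_comm (iteratedDeriv k G _), integral_const_mul,
    integral_iteratedDeriv_mul_pow, Nat.sub_sub, ← hdesc]
  push_cast
  ring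

end SchwartzMap

lemma sum_range_pow_div_factorial_mul_pow_div_factorial (a b : ℝ) (r : ℕ) :
    ∑ j ∈ range (r + 1), a ^ j / j ! * (b ^ (r - j) / (r - j)!) = (a + b) ^ r / r ! := by
  rw [add_pow, sum_div]
  refine sum_congr rfl fun j hj ↦ ?_
  rw [Nat.cast_choose ℝ (Nat.lt_succ_iff.mp (mem_range.mp hj))]
  field_simp

section Moments

variable {m : ℕ} (μ : ℕ → ℝ)

lemma sum_descFactorial_mul_of_moments_of_dvd
    (hμ : ∀ s, μ (2 * m * s) = (2 * m * s)! * ((-1) ^ (m + 1)) ^ s / s !) (k r : ℕ) :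
    ∑ j ∈ range (r + 1), ((-1) ^ m) ^ j / j ! * ((2 * m * r + k).descFactorial (2 * m * j + k) *
        μ (2 * m * r + k - (2 * m * j + k))) =
      if r = 0 then (k ! : ℝ) else 0 := by
  have hterm : ∀ j ∈ range (r + 1),
      ((-1 : ℝ) ^ m) ^ j / j ! * ((2 * m * r + k).descFactorial (2 * m * j + k) *
        μ (2 * m * r + k - (2 * m * j + k))) =
        (2 * m * r + k)! * (((-1) ^ m) ^ j / j ! * (((-1) ^ (m + 1)) ^ (r - j) / (r - j)!)) := by
    intro j hj
    have hjr := Nat.mul_le_mul_left (2 * m) (mem_range_succ_iff.mp hj)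
    have hidx : 2 * m * r + k - (2 * m * j + k) = 2 * m * (r - j) := by
      rw [Nat.mul_sub]
      omega
    have hfact := Nat.factorial_mul_descFactorial (n := 2 * m * r + k) (k := 2 * m * j + k)
      (by omega)
    rw [hidx] at hfact
    rw [hidx, hμ, ← hfact]
    push_cast
    field_simp
  have hcancel : (-1 : ℝ) ^ m + (-1) ^ (m + 1) = 0 := by ring
  rw [sum_congr rfl hterm, ← mul_sum, sum_range_pow_div_factorial_mul_pow_div_factorial, hcancel]
  rcases r.eq_zero_or_pos with rfl | hr0
  · simp
  · simp [hr0.ne']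

lemma sum_descFactorial_mul_of_moments (hm : 1 ≤ m)
    (hμ_zero : ∀ n, ¬ 2 * m ∣ n → μ n = 0)
    (hμ : ∀ s, μ (2 * m * s) = (2 * m * s)! * ((-1) ^ (m + 1)) ^ s / s !) (k l : ℕ) :
    ∑ j ∈ range (l / (2 * m) + 1),
        ((-1) ^ m) ^ j / j ! * (l.descFactorial (2 * m * j + k) * μ (l - (2 * m * j + k))) =
      if k = l then (l ! : ℝ) else 0 := by
  have hterm_zero (j : ℕ) (h : l < 2 * m * j + k) :
      ((-1 : ℝ) ^ m) ^ j / j ! * (l.descFactorial (2 * m * j + k) * μ (l - (2 * m * j + k))) =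
        0 := by
    simp [Nat.descFactorial_eq_zero_iff_lt.mpr h]
  by_cases hdvd : k ≤ l ∧ 2 * m ∣ l - k
  · obtain ⟨hkl, r, hr⟩ := hdvd
    obtain rfl : l = 2 * m * r + k := by omega
    have hsub : range (r + 1) ⊆ range ((2 * m * r + k) / (2 * m) + 1) := by
      refine range_subset_range.mpr (Nat.succ_le_succ ?_)
      rw [Nat.le_div_iff_mul_le (by omega)]
      nlinarith
    rw [← sum_subset hsub fun j _ hj ↦ hterm_zero j <| by
      have := Nat.mul_lt_mul_of_pos_left (not_le.mp (mem_range_succ_iff.not.mp hj))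
        (by omega : 0 < 2 * m)
      omega]
    rw [sum_descFactorial_mul_of_moments_of_dvd μ hμ]
    rcases r.eq_zero_or_pos with rfl | hr0
    · simp
    · have := Nat.mul_pos (by omega : 0 < 2 * m) hr0
      rw [if_neg hr0.ne', if_neg (by omega)]
  · rw [if_neg (by rintro rfl; exact hdvd ⟨le_rfl, by simp⟩)]
    refine sum_eq_zero fun j _ ↦ ?_
    rcases lt_or_ge l (2 * m * j + k) with h | h
    · exact hterm_zero j h
    · rw [hμ_zero _ fun hd ↦ hdvd ⟨by omega, ?_⟩, mul_zero, mul_zero]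
      have hlk : l - k = (l - (2 * m * j + k)) + 2 * m * j := by omega
      rw [hlk]
      exact hd.add (dvd_mul_right _ _)

end Moments

/-- The profile equation `B F = 0` of the self-similar kernel of `∂ₜ u = -(-Δ)^m u`;
for `m = 1` it is solved by the Gaussian `e^{-y²/4}/√(4π)`. -/
def IsPolyharmonicProfile (m : ℕ) (F : ℝ → ℝ) : Prop :=
  ∀ y : ℝ, (-1 : ℝ) ^ (m + 1) * iteratedDeriv (2 * m) F y +
    (1 / (2 * (m : ℝ))) * y * deriv F y + (1 / (2 * (m : ℝ))) * F y = 0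

namespace IsPolyharmonicProfile

variable {m : ℕ} {F : 𝓢(ℝ, ℝ)}

lemma moment_recurrence (hm : 1 ≤ m) (hF : IsPolyharmonicProfile m F) (n : ℕ) :
    n * F.moment n = 2 * m * (-1) ^ (m + 1) * n.descFactorial (2 * m) * F.moment (n - 2 * m) := by
  have hzero : ∫ y, ((-1) ^ (m + 1) * (iteratedDeriv (2 * m) F y * y ^ n) +
      (1 / (2 * m)) * (deriv F y * y ^ (n + 1))) + (1 / (2 * m)) * (F y * y ^ n) = 0 := by
    rw [← integral_zero ℝ ℝ]
    congr 1 with y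
    linear_combination y ^ n * hF y
  have hderiv := F.integrable_iteratedDeriv_mul_pow 1 (n + 1)
  rw [iteratedDeriv_one] at hderiv
  have hleading : Integrable fun y ↦ (-1) ^ (m + 1) * (iteratedDeriv (2 * m) F y * y ^ n) :=
    (F.integrable_iteratedDeriv_mul_pow _ _).const_mul _
  have hdrift : Integrable fun y ↦ (1 / (2 * m)) * (deriv F y * y ^ (n + 1)) :=
    hderiv.const_mul _
  have hsum : Integrable fun y ↦ (-1) ^ (m + 1) * (iteratedDeriv (2 * m) F y * y ^ n) +
      (1 / (2 * m)) * (deriv F y * y ^ (n + 1)) := hleading.add hdrift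
  rw [integral_add hsum ((F.integrable_mul_pow n).const_mul _), integral_add hleading hdrift,
    integral_const_mul, integral_const_mul, integral_const_mul,
    F.integral_iteratedDeriv_mul_pow, F.integral_deriv_mul_pow, Nat.add_sub_cancel,
    pow_mul, neg_one_sq, one_pow, ← SchwartzMap.moment] at hzero
  have hm0 : (m : ℝ) ≠ 0 := by positivity
  field_simp at hzero
  push_cast at hzero
  linear_combination -hzero

lemma moment_eq_zero_of_not_dvd (hm : 1 ≤ m) (hF : IsPolyharmonicProfile m F) {n : ℕ}
    (hn : ¬ 2 * m ∣ n) : F.moment n = 0 := by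
  induction n using Nat.strong_induction_on with
  | _ n ih =>
    have hn0 : (n : ℝ) ≠ 0 := by
      rintro h
      exact hn (by simp [Nat.cast_eq_zero.mp h])
    have hrec := moment_recurrence hm hF n
    rcases lt_or_ge n (2 * m) with hlt | hge
    · rw [Nat.descFactorial_eq_zero_iff_lt.mpr hlt] at hrec
      simpa [hn0] using hrec
    · have hn' : ¬ 2 * m ∣ n - 2 * m := fun h ↦ hn (by simpa [hge] using h.add (dvd_refl _))
      rw [ih (n - 2 * m) (by omega) hn'] at hrec
      simpa [hn0] using hrec

lemma moment_two_mul_mul (hm : 1 ≤ m) (hF : IsPolyharmonicProfile m F)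
    (hInt : ∫ y, F y = 1) (s : ℕ) :
    F.moment (2 * m * s) = (2 * m * s)! * ((-1) ^ (m + 1)) ^ s / s ! := by
  induction s with
  | zero => simpa [SchwartzMap.moment] using hInt
  | succ s ih =>
    have hrec := moment_recurrence hm hF (2 * m * (s + 1))
    have hfact := Nat.factorial_mul_descFactorial (n := 2 * m * (s + 1)) (k := 2 * m)
      (by nlinarith)
    have hsub : 2 * m * (s + 1) - 2 * m = 2 * m * s := by rw [Nat.mul_succ, Nat.add_sub_cancel]
    rw [hsub] at hrec hfact
    rw [ih] at hrec
    have hn0 : ((2 * m * (s + 1) : ℕ) : ℝ) ≠ 0 := by positivity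
    apply mul_left_cancel₀ hn0
    rw [hrec, ← hfact, Nat.factorial_succ]
    push_cast
    field_simp
    ring

end IsPolyharmonicProfile

/-- Bi-orthonormality `⟨ψ_k, ψ*_l⟩_{L²(ℝ)} = δ_{kl}` of the kernel derivatives
`ψ_k = ((−1)^k/√(k!))D^kF` and the generalized Hermite polynomials
`ψ*_l = (1/√(l!))Σ_j ((−1)^{mj}/j!)D^{2mj}(y^l)`, for a Schwartz kernel with
`BF = 0` and `∫F = 1`. -/
theorem biorthonormality_kernel_and_polynomials
    (m : ℕ) (hm : 1 ≤ m) (F : SchwartzMap ℝ ℝ)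
    (hF : ∀ y : ℝ, (-1 : ℝ) ^ (m + 1) * iteratedDeriv (2 * m) (⇑F) y +
      (1 / (2 * (m : ℝ))) * y * deriv (⇑F) y + (1 / (2 * (m : ℝ))) * F y = 0)
    (hInt : (∫ y : ℝ, F y) = 1) :
    ∀ k l : ℕ,
      (∫ y : ℝ,
        (((-1 : ℝ) ^ k / Real.sqrt (Nat.factorial k)) * iteratedDeriv k (⇑F) y) *
        ((1 / Real.sqrt (Nat.factorial l)) *
          ∑ j ∈ Finset.range (l / (2 * m) + 1),
            ((-1 : ℝ) ^ (m * j) / (Nat.factorial j)) *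
              iteratedDeriv (2 * m * j) (fun x : ℝ => x ^ l) y)) =
      if k = l then 1 else 0 := by
  intro k l
  set c : ℝ := (-1) ^ k / √(k !) * (1 / √(l !))
  have hintegrand (j : ℕ) (y : ℝ) :
      (-1) ^ k / √(k !) * iteratedDeriv k F y *
        (1 / √(l !) * ((-1) ^ (m * j) / j ! * iteratedDeriv (2 * m * j) (· ^ l) y)) =
      c * ((-1) ^ (m * j) / j !) *
        (iteratedDeriv k F y * iteratedDeriv (2 * m * j) (· ^ l) y) := by
    ring
  simp_rw [mul_sum, hintegrand]
  rw [integral_finsetSum _ fun j _ ↦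
    (F.integrable_iteratedDeriv_mul_iteratedDeriv_pow k (2 * m * j) l).const_mul _]
  simp_rw [integral_const_mul, F.integral_iteratedDeriv_mul_iteratedDeriv_pow, pow_mul]
  have hsum := sum_descFactorial_mul_of_moments F.moment hm
    (fun _ ↦ IsPolyharmonicProfile.moment_eq_zero_of_not_dvd hm hF)
    (IsPolyharmonicProfile.moment_two_mul_mul hm hF hInt) k l
  calc _ = c * (-1) ^ k * ∑ j ∈ range (l / (2 * m) + 1), ((-1) ^ m) ^ j / j ! *
        (l.descFactorial (2 * m * j + k) * F.moment (l - (2 * m * j + k))) := by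
        rw [mul_sum]
        exact sum_congr rfl fun j _ ↦ by ring
    _ = if k = l then 1 else 0 := by
      rw [hsum]
      split_ifs with hkl
      · subst hkl
        have hsqrt : √(k ! : ℝ) ^ 2 = k ! := Real.sq_sqrt (by positivity)
        simp only [c]
        field_simp
        rw [hsqrt, ← pow_mul, pow_mul', neg_one_sq, one_pow, one_mul]
      · simp
end
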